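/- Suppose a statistic T with values in ℝ has global sensitivity s > 0, i.e., |T(D) − T(D')| ≤ s for all neighboring databases D, D'. Then the Laplace mechanism M(D) = T(D) + η, with η ~ Laplace(0, s/ε), satisfies ε-differential privacy: for all neighboring D, D' and all measurable S ⊆ ℝ, P(M(D) ∈ S) ≤ exp(ε) P(M(D') ∈ S). -/
import Mathlib


open MeasureTheory Real

/-- The Laplace distribution with location 0 and scale `b`,
with density `(2b)⁻¹ exp(−|x|/b)` w.r.t. Lebesgue measure. -/
noncomputable def laplaceMeasure (b : ℝ) : Measure ℝ :=
  volume.withDensity (fun x => ENNReal.ofReal ((1 / (2 * b)) * exp (-|x| / b)))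

/-- The Laplace mechanism: the distribution of `T D + η` with `η ~ Laplace(0, s/ε)`. -/
noncomputable def laplaceMechanism {Databases : Type*} (T : Databases → ℝ) (s ε : ℝ)
    (D : Databases) : Measure ℝ :=
  Measure.map (fun x => T D + x) (laplaceMeasure (s / ε))

theorem stmt_10 {Databases : Type*} (neighbor : Databases → Databases → Prop)
    (T : Databases → ℝ) (s ε : ℝ) (hs : 0 < s) (hε : 0 < ε)
    (hsens : ∀ D D', neighbor D D' → |T D - T D'| ≤ s) :
    ∀ D D', neighbor D D' → ∀ S : Set ℝ, MeasurableSet S →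
      laplaceMechanism T s ε D S ≤ ENNReal.ofReal (exp ε) * laplaceMechanism T s ε D' S := by
  intro D D' hDD' S hS
  have hbpos : 0 < s / ε := div_pos hs hε
  set b := s / ε with hb
  set c := T D - T D' with hc
  have hcle : |c| ≤ s := hsens D D' hDD'
  set φ : ℝ → ENNReal := fun x => ENNReal.ofReal ((1 / (2 * b)) * exp (-|x| / b)) with hφ
  have hA : MeasurableSet ((fun x => T D + x) ⁻¹' S) := hS.preimage (measurable_const_add _)
  have hA' : MeasurableSet ((fun x => T D' + x) ⁻¹' S) := hS.preimage (measurable_const_add _)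
  have happ : ∀ E : Databases,
      laplaceMechanism T s ε E S = ∫⁻ x in (fun x => T E + x) ⁻¹' S, φ x := by
    intro E
    rw [laplaceMechanism, Measure.map_apply (measurable_const_add _) hS, laplaceMeasure,
      withDensity_apply _ (hS.preimage (measurable_const_add _))]
  rw [happ D, happ D']
  have key : ∫⁻ x in (fun x => T D' + x) ⁻¹' S, φ x
      = ∫⁻ x in (fun x => T D + x) ⁻¹' S, φ (x + c) := by
    rw [← lintegral_indicator hA' φ, ← lintegral_indicator hA fun x => φ (x + c),
      ← lintegral_add_right_eq_self (((fun x => T D' + x) ⁻¹' S).indicator φ) c]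
    have hmem : ∀ x : ℝ, x + c ∈ (fun x => T D' + x) ⁻¹' S ↔ x ∈ (fun x => T D + x) ⁻¹' S := by
      intro x
      simp only [Set.mem_preimage]
      rw [show T D' + (x + c) = T D + x by rw [hc]; ring]
    refine lintegral_congr fun x => ?_
    by_cases hx : x ∈ (fun x => T D + x) ⁻¹' S
    · rw [Set.indicator_of_mem ((hmem x).mpr hx), Set.indicator_of_mem hx]
    · rw [Set.indicator_of_notMem (fun h => hx ((hmem x).mp h)),
        Set.indicator_of_notMem hx]
  rw [key, ← lintegral_const_mul' _ _ (by simp : ENNReal.ofReal (exp ε) ≠ ⊤)]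
  refine lintegral_mono fun x => ?_
  show φ x ≤ ENNReal.ofReal (exp ε) * φ (x + c)
  rw [hφ]
  simp only []
  rw [← ENNReal.ofReal_mul (exp_pos ε).le]
  apply ENNReal.ofReal_le_ofReal
  rw [mul_comm (exp ε), mul_assoc]
  apply mul_le_mul_of_nonneg_left _ (by positivity)
  rw [← Real.exp_add, Real.exp_le_exp]
  have hsb : s / b = ε := by
    rw [hb]; field_simp
  have h2 : |x + c| - |x| ≤ s := by
    have := abs_sub_abs_le_abs_sub (x + c) x
    have h3 : |x + c - x| = |c| := by rw [show x + c - x = c by ring]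
    linarith
  have h4 : (|x + c| - |x|) / b ≤ s / b := by gcongr
  rw [hsb] at h4
  have h5 : (|x + c| - |x|) / b = |x + c| / b - |x| / b := sub_div _ _ _
  rw [neg_div, neg_div]
  linarith
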